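/- For all integers m ≥ 1 and n ≥ 0, and every complex z with Re z ≥ 0 and 0 < |z| < 1, set R = S_{m+1}(z) − z^{−(m+1)} − Σ_{k=0}^{n} (−1)^k · C(k+m, m) · ζ(k+m+1) · z^k, where C(k+m,m) is a binomial coefficient and ζ is the Riemann zeta function. Then |Re R| ≤ C(n+m+1, m) · ζ(n+m+2) · |z|^{n+1} and |Im R| ≤ C(n+m+1, m) · ζ(n+m+2) · |z|^{n+1}. (This is the Laurent expansion of the polygamma function ψ_m at 0 with explicit remainder bounds.) -/

import Mathlib

/-!
Write `z + k + 1 = (k + 1) (1 + w)` with `w = z / (k + 1)`. Then the `k`-th term of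
`S_{m+1}(z) - z^{-(m+1)}` is `(k + 1)^{-(m+1)} (1 + w)^{-(m+1)}`, and summing the degree-`n` Taylor
polynomials of `(1 + w)^{-(m+1)}` over `k` produces the zeta sum. Since `Re w ≥ 0`, `‖1 + w‖ ≥ 1`;
multiplying the Taylor remainder of `(1 + w)^{-(m+1)}` by `1 + w` gives the remainder for `m - 1`
plus one binomial term (Pascal's rule), so by induction on `m` it is at most
`C(n+m+1, m) ‖w‖^{n+1}`. Summing these bounds over `k` produces the factor `ζ(n+m+2)`.
-/

open Complex

/-- `S j z = ∑_{k=0}^∞ 1/(z+k)^j`, so that `ψ_m(z) = (−1)^{m+1} m! S_{m+1}(z)`. -/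
noncomputable def S (j : ℕ) (z : ℂ) : ℂ := ∑' k : ℕ, 1 / (z + k) ^ j

open Finset

/-- The degree-`n` Taylor polynomial of `(1 + w)⁻¹ ^ (m + 1)` at `w = 0`. -/
def invOneAddPowTaylor {R : Type*} [CommRing R] (m n : ℕ) (w : R) : R :=
  ∑ j ∈ range (n + 1), (-1) ^ j * ((j + m).choose m : R) * w ^ j

section Taylor

variable {R : Type*} [CommRing R] (n : ℕ) (w : R)

theorem one_add_mul_invOneAddPowTaylor_zero :
    (1 + w) * invOneAddPowTaylor 0 n w = 1 - (-w) ^ (n + 1) := by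
  have geom : invOneAddPowTaylor 0 n w = ∑ j ∈ range (n + 1), (-w) ^ j :=
    sum_congr rfl fun j _ => by
      rw [neg_pow w, Nat.add_zero, Nat.choose_zero_right, Nat.cast_one, mul_one]
  rw [geom, ← mul_neg_geom_sum, sub_neg_eq_add]

theorem one_add_mul_invOneAddPowTaylor_succ (m : ℕ) :
    (1 + w) * invOneAddPowTaylor (m + 1) n w =
      invOneAddPowTaylor m n w + (-1) ^ n * ((n + m + 1).choose (m + 1) : R) * w ^ (n + 1) := by
  induction n with
  | zero => simp [invOneAddPowTaylor]
  | succ n ih =>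
    have pascal : ((n + m + 1 + 1).choose (m + 1) : R) =
        (n + m + 1).choose m + (n + m + 1).choose (m + 1) := by
      rw [Nat.choose_succ_succ', Nat.cast_add]
    simp only [invOneAddPowTaylor, sum_range_succ] at ih ⊢
    rw [show n + 1 + m = n + m + 1 by omega, show n + 1 + (m + 1) = n + m + 1 + 1 by omega,
      show n + (m + 1) = n + m + 1 by omega] at *
    linear_combination ih + (-1) ^ (n + 1) * w ^ (n + 1) * pascal

end Taylor

theorem norm_inv_one_add_pow_sub_invOneAddPowTaylor_le {𝕜 : Type*} [NormedField 𝕜] (m n : ℕ)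
    {w : 𝕜} (hw : 1 ≤ ‖1 + w‖) :
    ‖((1 + w) ^ (m + 1))⁻¹ - invOneAddPowTaylor m n w‖ ≤ (n + m + 1).choose m * ‖w‖ ^ (n + 1) := by
  have hw₀ : 1 + w ≠ 0 := norm_pos_iff.mp (one_pos.trans_le hw)
  have le_norm_mul (x : 𝕜) : ‖x‖ ≤ ‖(1 + w) * x‖ := by
    rw [norm_mul]; exact le_mul_of_one_le_left (norm_nonneg x) hw
  induction m with
  | zero =>
    have key : (1 + w) * (((1 + w) ^ (0 + 1))⁻¹ - invOneAddPowTaylor 0 n w) = (-w) ^ (n + 1) := by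
      rw [mul_sub, zero_add, pow_one, mul_inv_cancel₀ hw₀, one_add_mul_invOneAddPowTaylor_zero]
      ring
    calc ‖((1 + w) ^ (0 + 1))⁻¹ - invOneAddPowTaylor 0 n w‖
        ≤ ‖(-w) ^ (n + 1)‖ := key ▸ le_norm_mul _
      _ = (n + 0 + 1).choose 0 * ‖w‖ ^ (n + 1) := by simp
  | succ m ih =>
    set c := (n + m + 1).choose (m + 1)
    have key : (1 + w) * (((1 + w) ^ (m + 2))⁻¹ - invOneAddPowTaylor (m + 1) n w) =
        ((1 + w) ^ (m + 1))⁻¹ - invOneAddPowTaylor m n w - (-1) ^ n * (c : 𝕜) * w ^ (n + 1) := by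
      rw [mul_sub, one_add_mul_invOneAddPowTaylor_succ, pow_succ' _ (m + 1), mul_inv,
        ← mul_assoc, mul_inv_cancel₀ hw₀, one_mul]
      ring
    have hc : ‖(-1) ^ n * (c : 𝕜) * w ^ (n + 1)‖ ≤ c * ‖w‖ ^ (n + 1) := by
      rw [norm_mul, norm_mul, norm_pow, norm_neg, norm_one, one_pow, one_mul, norm_pow]
      gcongr
      exact (Nat.norm_cast_le c).trans_eq (by rw [norm_one, mul_one])
    calc ‖((1 + w) ^ (m + 1 + 1))⁻¹ - invOneAddPowTaylor (m + 1) n w‖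
        ≤ ‖((1 + w) ^ (m + 1))⁻¹ - invOneAddPowTaylor m n w - (-1) ^ n * (c : 𝕜) * w ^ (n + 1)‖ :=
          key ▸ le_norm_mul _
      _ ≤ (n + m + 1).choose m * ‖w‖ ^ (n + 1) + c * ‖w‖ ^ (n + 1) :=
          (norm_sub_le _ _).trans (add_le_add ih hc)
      _ = (n + (m + 1) + 1).choose (m + 1) * ‖w‖ ^ (n + 1) := by
          rw [show n + (m + 1) + 1 = n + m + 1 + 1 by omega, Nat.choose_succ_succ']
          push_cast; ring

theorem one_div_add_pow_sub_sum_eq {K : Type*} [Field K] (m n : ℕ) (z : K) {c : K} (hc : c ≠ 0) :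
    1 / (z + c) ^ (m + 1) -
        ∑ j ∈ range (n + 1), (-1) ^ j * ((j + m).choose m : K) * (1 / c ^ (j + m + 1)) * z ^ j =
      (c ^ (m + 1))⁻¹ * (((1 + z / c) ^ (m + 1))⁻¹ - invOneAddPowTaylor m n (z / c)) := by
  rw [invOneAddPowTaylor, mul_sub, mul_sum, ← mul_inv, ← mul_pow, mul_add, mul_one,
    mul_div_cancel₀ z hc, add_comm c z, one_div]
  congr 1
  refine sum_congr rfl fun j _ => ?_
  rw [div_pow, pow_add c (j + m), pow_add c j]
  field_simp
  ring

theorem le_norm_add_ofReal {z : ℂ} (hz : 0 ≤ z.re) (c : ℝ) : c ≤ ‖z + c‖ :=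
  calc c ≤ (z + c).re := by simpa using hz
    _ ≤ ‖z + c‖ := re_le_norm _

theorem norm_one_div_add_pow_sub_sum_le (m n : ℕ) {z : ℂ} (hz : 0 ≤ z.re) {c : ℝ} (hc : 0 < c) :
    ‖1 / (z + c) ^ (m + 1) -
        ∑ j ∈ range (n + 1), (-1) ^ j * ((j + m).choose m : ℂ) * (1 / (c : ℂ) ^ (j + m + 1)) * z ^ j‖
      ≤ (n + m + 1).choose m * ‖z‖ ^ (n + 1) / c ^ (n + m + 2) := by
  have hw : 1 ≤ ‖1 + z / c‖ := by
    simpa [add_comm] using le_norm_add_ofReal (by simpa using div_nonneg hz hc.le : 0 ≤ (z / c).re) 1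
  rw [one_div_add_pow_sub_sum_eq m n z (ofReal_ne_zero.mpr hc.ne'), norm_mul]
  calc ‖((c : ℂ) ^ (m + 1))⁻¹‖ * ‖((1 + z / c) ^ (m + 1))⁻¹ - invOneAddPowTaylor m n (z / c)‖
      ≤ (c ^ (m + 1))⁻¹ * ((n + m + 1).choose m * (‖z‖ / c) ^ (n + 1)) := by
        rw [norm_inv, norm_pow, norm_real, Real.norm_of_nonneg hc.le]
        gcongr
        simpa [norm_div, norm_real, abs_of_pos hc] using
          norm_inv_one_add_pow_sub_invOneAddPowTaylor_le m n hw
    _ = (n + m + 1).choose m * ‖z‖ ^ (n + 1) / c ^ (n + m + 2) := by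
        rw [show n + m + 2 = (m + 1) + (n + 1) by omega, div_pow, pow_add]
        field_simp
        ring

theorem hasSum_one_div_nat_add_one_pow {N : ℕ} (hN : 1 < N) :
    HasSum (fun k : ℕ => 1 / ((k : ℂ) + 1) ^ N) (riemannZeta N) := by
  have hsum : Summable (fun k : ℕ => 1 / (k : ℂ) ^ N) := by
    simpa using summable_one_div_nat_cpow.mpr (by exact_mod_cast hN : 1 < ((N : ℂ)).re)
  rw [zeta_nat_eq_tsum_of_gt_one hN]
  simpa [zero_pow (by omega : N ≠ 0)] using (hasSum_nat_add_iff' 1).mpr hsum.hasSum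

theorem hasSum_one_div_nat_add_one_pow_re {N : ℕ} (hN : 1 < N) :
    HasSum (fun k : ℕ => 1 / ((k : ℝ) + 1) ^ N) (riemannZeta N).re := by
  have hre (k : ℕ) : (1 / ((k : ℂ) + 1) ^ N).re = 1 / ((k : ℝ) + 1) ^ N := by
    rw [← ofReal_re (1 / ((k : ℝ) + 1) ^ N)]
    push_cast
    rfl
  simpa only [hre] using hasSum_re (hasSum_one_div_nat_add_one_pow hN)

theorem hasSum_S_sub_inv_pow {j : ℕ} (hj : 1 < j) {z : ℂ} (hz : 0 ≤ z.re) :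
    HasSum (fun k : ℕ => 1 / (z + (k + 1)) ^ j) (S j z - (z ^ j)⁻¹) := by
  have hbound (k : ℕ) : ‖1 / (z + (k + 1)) ^ j‖ ≤ 1 / ((k : ℝ) + 1) ^ j := by
    rw [norm_div, norm_one, norm_pow]
    gcongr
    exact_mod_cast le_norm_add_ofReal hz ((k : ℝ) + 1)
  have hsum : Summable (fun k : ℕ => 1 / (z + k) ^ j) :=
    (summable_nat_add_iff 1).mp <| .of_norm_bounded
      (hasSum_one_div_nat_add_one_pow_re hj).summable fun k => by simpa using hbound k
  simpa [S] using (hasSum_nat_add_iff' 1).mpr hsum.hasSum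

theorem hasSum_laurent_remainder {m : ℕ} (hm : 1 ≤ m) (n : ℕ) {z : ℂ} (hz : 0 ≤ z.re) :
    HasSum (fun k : ℕ => 1 / (z + ((k + 1 : ℝ) : ℂ)) ^ (m + 1) - ∑ j ∈ range (n + 1),
        (-1) ^ j * ((j + m).choose m : ℂ) * (1 / ((k + 1 : ℝ) : ℂ) ^ (j + m + 1)) * z ^ j)
      (S (m + 1) z - z ^ (-((m : ℤ) + 1)) - ∑ j ∈ range (n + 1),
        (-1 : ℂ) ^ j * (j + m).choose m * riemannZeta ((j + m + 1 : ℕ) : ℂ) * z ^ j) := by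
  have hζ := hasSum_sum fun j (_ : j ∈ range (n + 1)) =>
    ((hasSum_one_div_nat_add_one_pow (N := j + m + 1) (by omega)).mul_left
      ((-1 : ℂ) ^ j * (j + m).choose m)).mul_right (z ^ j)
  have hzpow : z ^ (-((m : ℤ) + 1)) = (z ^ (m + 1))⁻¹ := by
    rw [zpow_neg]
    exact_mod_cast congrArg Inv.inv (zpow_natCast z (m + 1))
  rw [hzpow]
  refine ((hasSum_S_sub_inv_pow (j := m + 1) (by omega) hz).sub hζ).congr_fun fun k => ?_
  push_cast
  rfl

theorem laurent_polygamma_remainder_general (m n : ℕ) (hm : 1 ≤ m) (z : ℂ) (hre : 0 ≤ z.re) :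
    |(S (m + 1) z - z ^ (-((m : ℤ) + 1))
        - ∑ k ∈ Finset.range (n + 1),
            (-1 : ℂ) ^ k * (Nat.choose (k + m) m) * riemannZeta ((k + m + 1 : ℕ) : ℂ) * z ^ k).re|
      ≤ (Nat.choose (n + m + 1) m) * (riemannZeta ((n + m + 2 : ℕ) : ℂ)).re
          * ‖z‖ ^ (n + 1) ∧
    |(S (m + 1) z - z ^ (-((m : ℤ) + 1))
        - ∑ k ∈ Finset.range (n + 1),
            (-1 : ℂ) ^ k * (Nat.choose (k + m) m) * riemannZeta ((k + m + 1 : ℕ) : ℂ) * z ^ k).im|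
      ≤ (Nat.choose (n + m + 1) m) * (riemannZeta ((n + m + 2 : ℕ) : ℂ)).re
          * ‖z‖ ^ (n + 1) := by
  have hζ := (hasSum_one_div_nat_add_one_pow_re (N := n + m + 2) (by omega)).mul_left
    ((n + m + 1).choose m * ‖z‖ ^ (n + 1))
  have hbound := (hasSum_laurent_remainder hm n hre).norm_le_of_bounded hζ fun k => by
    simpa only [mul_one_div] using
      norm_one_div_add_pow_sub_sum_le m n hre (c := k + 1) (by positivity)
  rw [mul_right_comm] at hbound
  exact ⟨(abs_re_le_norm _).trans hbound, (abs_im_le_norm _).trans hbound⟩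

/-- Laurent expansion of the polygamma function at `0` with explicit remainder bounds:
for `m ≥ 1`, `n ≥ 0`, `Re z ≥ 0` and `0 < |z| < 1`, setting
`R = S_{m+1}(z) − z^{−(m+1)} − Σ_{k=0}^{n} (−1)^k C(k+m,m) ζ(k+m+1) z^k`,
both `|Re R|` and `|Im R|` are at most `C(n+m+1,m)·ζ(n+m+2)·|z|^{n+1}`. -/
theorem laurent_polygamma_remainder (m n : ℕ) (hm : 1 ≤ m) (z : ℂ) (hre : 0 ≤ z.re)
    (hz0 : 0 < ‖z‖) (hz1 : ‖z‖ < 1) :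
    |(S (m + 1) z - z ^ (-((m : ℤ) + 1))
        - ∑ k ∈ Finset.range (n + 1),
            (-1 : ℂ) ^ k * (Nat.choose (k + m) m) * riemannZeta ((k + m + 1 : ℕ) : ℂ) * z ^ k).re|
      ≤ (Nat.choose (n + m + 1) m) * (riemannZeta ((n + m + 2 : ℕ) : ℂ)).re
          * ‖z‖ ^ (n + 1) ∧
    |(S (m + 1) z - z ^ (-((m : ℤ) + 1))
        - ∑ k ∈ Finset.range (n + 1),
            (-1 : ℂ) ^ k * (Nat.choose (k + m) m) * riemannZeta ((k + m + 1 : ℕ) : ℂ) * z ^ k).im|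
      ≤ (Nat.choose (n + m + 1) m) * (riemannZeta ((n + m + 2 : ℕ) : ℂ)).re
          * ‖z‖ ^ (n + 1) :=
  laurent_polygamma_remainder_general m n hm z hre
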